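/- arXiv:2505.23023 — 2 statements merged into one kernel-verified Lean document; each statement's English description precedes it below -/
import Mathlib

section
/- Let f : ℝ^D → ℝ be even, twice continuously differentiable and compactly supported. Then ∫_{ℝ^d} f(z, φ(h z)/h) dz = ∫_{ℝ^d} f(z, 0) dz + O(h²) as h → 0⁺. -/
open MeasureTheory Filter Asymptotics Topology

/-- The identification `ℝ^D = ℝ^d × ℝ^{D-d}`: `pairFn d D z w` is the vector of `ℝ^D` whose
first `d` coordinates are those of `z` and whose last `D - d` coordinates are those of `w`. -/
noncomputable def pairFn (d D : ℕ) (z : EuclideanSpace ℝ (Fin d))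
    (w : EuclideanSpace ℝ (Fin (D - d))) : EuclideanSpace ℝ (Fin D) :=
  WithLp.toLp 2 (fun i : Fin D => if h : (i : ℕ) < d then z ⟨(i : ℕ), h⟩
    else w ⟨(i : ℕ) - d, by have := i.isLt; omega⟩)

open Metric

noncomputable def pairCLM (d D : ℕ) :
    (EuclideanSpace ℝ (Fin d)) × (EuclideanSpace ℝ (Fin (D - d))) →L[ℝ]
      EuclideanSpace ℝ (Fin D) :=
  LinearMap.toContinuousLinearMap
  { toFun := fun p => pairFn d D p.1 p.2
    map_add' := by
      intro p q
      ext i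
      by_cases h : (i : ℕ) < d <;> simp [pairFn, h, PiLp.add_apply]
    map_smul' := by
      intro c p
      ext i
      by_cases h : (i : ℕ) < d <;> simp [pairFn, h, PiLp.smul_apply] }

lemma pairCLM_apply (d D : ℕ) (z : EuclideanSpace ℝ (Fin d))
    (w : EuclideanSpace ℝ (Fin (D - d))) : pairCLM d D (z, w) = pairFn d D z w := rfl

lemma norm_fst_le_pair (d D : ℕ) (hdD : d ≤ D) (z : EuclideanSpace ℝ (Fin d))
    (w : EuclideanSpace ℝ (Fin (D - d))) : ‖z‖ ≤ ‖pairFn d D z w‖ := by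
  rw [EuclideanSpace.norm_eq, EuclideanSpace.norm_eq]
  apply Real.sqrt_le_sqrt
  have h1 : ∀ j : Fin d, ‖z j‖ ^ 2 = ‖pairFn d D z w (Fin.castLE hdD j)‖ ^ 2 := by
    intro j
    have : pairFn d D z w (Fin.castLE hdD j) = z j := by
      simp [pairFn, Fin.castLE]
    rw [this]
  calc ∑ j, ‖z j‖ ^ 2
      = ∑ i ∈ Finset.univ.map ⟨Fin.castLE hdD, Fin.castLE_injective hdD⟩,
          ‖pairFn d D z w i‖ ^ 2 := by
        rw [Finset.sum_map]
        exact Finset.sum_congr rfl fun j _ => h1 j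
    _ ≤ ∑ i, ‖pairFn d D z w i‖ ^ 2 :=
        Finset.sum_le_sum_of_subset_of_nonneg (Finset.subset_univ _)
          (fun i _ _ => by positivity)

lemma norm_snd_le_pair (d D : ℕ) (z : EuclideanSpace ℝ (Fin d))
    (w : EuclideanSpace ℝ (Fin (D - d))) : ‖w‖ ≤ ‖pairFn d D z w‖ := by
  rw [EuclideanSpace.norm_eq, EuclideanSpace.norm_eq]
  apply Real.sqrt_le_sqrt
  have hinj : Function.Injective (fun j : Fin (D - d) => (⟨d + (j : ℕ), by omega⟩ : Fin D)) := by
    intro a b hab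
    have : d + (a : ℕ) = d + (b : ℕ) := congrArg Fin.val hab
    exact Fin.ext (by omega)
  have h1 : ∀ j : Fin (D - d),
      ‖w j‖ ^ 2 = ‖pairFn d D z w ⟨d + (j : ℕ), by omega⟩‖ ^ 2 := by
    intro j
    have : pairFn d D z w ⟨d + (j : ℕ), by omega⟩ = w j := by
      simp only [pairFn, PiLp.toLp_apply]
      rw [dif_neg (by omega)]
      exact congrArg _ (Fin.ext (by simp))
    rw [this]
  calc ∑ j, ‖w j‖ ^ 2
      = ∑ i ∈ Finset.univ.map ⟨fun j : Fin (D - d) => (⟨d + (j : ℕ), by omega⟩ : Fin D), hinj⟩,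
          ‖pairFn d D z w i‖ ^ 2 := by
        rw [Finset.sum_map]
        exact Finset.sum_congr rfl fun j _ => h1 j
    _ ≤ ∑ i, ‖pairFn d D z w i‖ ^ 2 :=
        Finset.sum_le_sum_of_subset_of_nonneg (Finset.subset_univ _)
          (fun i _ _ => by positivity)


section MVT
variable {E F : Type*} [NormedAddCommGroup E] [NormedSpace ℝ E]
  [NormedAddCommGroup F] [NormedSpace ℝ F]

/-- Mean value inequality from 0 on a ball. -/
lemma mvt_ball0 {g : E → F} (hg : Differentiable ℝ g) {C r : ℝ}
    (hC : ∀ y : E, ‖y‖ ≤ r → ‖fderiv ℝ g y‖ ≤ C) {x : E} (hx : ‖x‖ ≤ r) :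
    ‖g x - g 0‖ ≤ C * ‖x‖ := by
  have h := (convex_closedBall (0 : E) r).norm_image_sub_le_of_norm_fderiv_le
    (f := g) (C := C) (fun y _ => (hg y))
    (fun y hy => hC y (by simpa [mem_closedBall_zero_iff] using hy))
    (mem_closedBall_self (le_trans (norm_nonneg x) hx))
    (mem_closedBall_zero_iff.2 hx)
  simpa using h

/-- Iterated mean value: if `‖Dg y‖ ≤ C‖y‖ⁿ` on the ball of radius `r`, then
`‖g x - g 0‖ ≤ C‖x‖^(n+1)` there. -/
lemma mvt_pow {g : E → F} (hg : Differentiable ℝ g) {C r : ℝ} (n : ℕ) (hC0 : 0 ≤ C)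
    (hC : ∀ y : E, ‖y‖ ≤ r → ‖fderiv ℝ g y‖ ≤ C * ‖y‖ ^ n) {x : E} (hx : ‖x‖ ≤ r) :
    ‖g x - g 0‖ ≤ C * ‖x‖ ^ (n + 1) := by
  have h := mvt_ball0 (C := C * ‖x‖ ^ n) (r := ‖x‖) hg
    (fun y hy => le_trans (hC y (le_trans hy hx))
      (by
        have : ‖y‖ ^ n ≤ ‖x‖ ^ n := pow_le_pow_left₀ (norm_nonneg y) hy n
        nlinarith [norm_nonneg x, norm_nonneg y]))
    (le_refl ‖x‖)
  calc ‖g x - g 0‖ ≤ C * ‖x‖ ^ n * ‖x‖ := h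
    _ = C * ‖x‖ ^ (n + 1) := by ring

end MVT

section Neg
variable {E F : Type*} [NormedAddCommGroup E] [NormedSpace ℝ E]
  [NormedAddCommGroup F] [NormedSpace ℝ F]

lemma hasFDerivAt_comp_neg' {g : E → F} {x : E} {A : E →L[ℝ] F}
    (hg : HasFDerivAt g A (-x)) : HasFDerivAt (fun y => g (-y)) (-A) x := by
  have h1 : HasFDerivAt (fun y : E => -y) (-(ContinuousLinearMap.id ℝ E)) x :=
    (hasFDerivAt_id x).neg
  have h2 := hg.comp x h1
  convert h2 using 1
  · ext v
    simp
  · ext v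
    simp

lemma fderiv_neg_of_even {g : E → F} (hg : Differentiable ℝ g)
    (heven : ∀ y, g (-y) = g y) (p : E) : fderiv ℝ g (-p) = -fderiv ℝ g p := by
  have h : HasFDerivAt (fun y => g (-y)) (-(fderiv ℝ g (-p))) p :=
    hasFDerivAt_comp_neg' (hg (-p)).hasFDerivAt
  have h2 : (fun y => g (-y)) = g := funext heven
  rw [h2] at h
  have h3 : fderiv ℝ g p = -(fderiv ℝ g (-p)) := h.fderiv
  rw [h3, neg_neg]

end Neg

section Bounds
variable {E F : Type*} [NormedAddCommGroup E] [NormedSpace ℝ E]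
  [NormedAddCommGroup F] [NormedSpace ℝ F]

lemma exists_bound_fderiv_of_hasCompactSupport {g : E → F} (hs : HasCompactSupport g)
    (hc : Continuous (fderiv ℝ g)) : ∃ C, ∀ p, ‖fderiv ℝ g p‖ ≤ C :=
  (hs.fderiv (𝕜 := ℝ)).exists_bound_of_continuous hc

lemma fderiv_bound_ball [ProperSpace E] {g : E → F} (hg : ContDiff ℝ 1 g) (R : ℝ) :
    ∃ M, 0 ≤ M ∧ ∀ y : E, ‖y‖ ≤ R → ‖fderiv ℝ g y‖ ≤ M := by
  obtain ⟨M', hM'⟩ := (isCompact_closedBall (0 : E) R).exists_bound_of_continuousOn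
    (hg.continuous_fderiv (by norm_num)).continuousOn
  exact ⟨max M' 0, le_max_right _ _,
    fun y hy => le_trans (hM' y (mem_closedBall_zero_iff.2 hy)) (le_max_left _ _)⟩

end Bounds

section Phi
variable {E F : Type*} [NormedAddCommGroup E] [NormedSpace ℝ E] [ProperSpace E]
  [NormedAddCommGroup F] [NormedSpace ℝ F]

lemma phi_bounds {φ : E → F} (hφ : ContDiff ℝ (⊤ : ℕ∞) φ) (hφ0 : φ 0 = 0)
    (hDφ0 : fderiv ℝ φ 0 = 0) (R : ℝ) :
    ∃ C : ℝ, 0 ≤ C ∧ (∀ x : E, ‖x‖ ≤ R → ‖φ x‖ ≤ C * ‖x‖ ^ 2) ∧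
      (∀ x : E, ‖x‖ ≤ R → ‖φ x - φ (-x)‖ ≤ C * ‖x‖ ^ 3) := by
  classical
  set Dφ := fderiv ℝ φ with hDφdef
  have hφd : Differentiable ℝ φ := hφ.differentiable (by simp)
  have hDφc : ContDiff ℝ (⊤ : ℕ∞) Dφ := hφ.fderiv_right (by simp)
  have hDφd : Differentiable ℝ Dφ := hDφc.differentiable (by simp)
  set D2 := fderiv ℝ Dφ with hD2def
  have hD2c : ContDiff ℝ (⊤ : ℕ∞) D2 := hDφc.fderiv_right (by simp)
  have hD2d : Differentiable ℝ D2 := hD2c.differentiable (by simp)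
  set D3 := fderiv ℝ D2 with hD3def
  obtain ⟨M2', hM2'⟩ := (isCompact_closedBall (0 : E) R).exists_bound_of_continuousOn
    (f := D2) (hD2c.continuous.continuousOn)
  set M2 := max M2' 0 with hM2def
  have hM2nn : 0 ≤ M2 := le_max_right _ _
  have hM2 : ∀ y : E, ‖y‖ ≤ R → ‖D2 y‖ ≤ M2 := fun y hy =>
    le_trans (hM2' y (mem_closedBall_zero_iff.2 hy)) (le_max_left _ _)
  obtain ⟨M3, hM3nn, hM3⟩ := fderiv_bound_ball (g := D2) (hD2c.of_le (by simp)) R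
  -- (a) ‖Dφ y‖ ≤ M2 ‖y‖
  have ha : ∀ y : E, ‖y‖ ≤ R → ‖Dφ y‖ ≤ M2 * ‖y‖ := by
    intro y hy
    have := mvt_pow (g := Dφ) hDφd 0 hM2nn
      (fun u hu => by simpa using hM2 u hu) hy
    simpa [hDφ0, ← hDφdef] using this
  -- (b) ‖φ x‖ ≤ M2 ‖x‖²
  have hb : ∀ x : E, ‖x‖ ≤ R → ‖φ x‖ ≤ M2 * ‖x‖ ^ 2 := by
    intro x hx
    have := mvt_pow (g := φ) hφd 1 hM2nn
      (fun u hu => by simpa using ha u hu) hx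
    simpa [hφ0] using this
  -- (c) Lipschitz-type bound on D2
  have hc : ∀ y : E, ‖y‖ ≤ R → ‖D2 y - D2 0‖ ≤ M3 * ‖y‖ := by
    intro y hy
    have := mvt_pow (g := D2) hD2d 0 hM3nn
      (fun u hu => by simpa using hM3 u hu) hy
    simpa using this
  -- (d) second order Taylor for Dφ
  have hd : ∀ x : E, ‖x‖ ≤ R → ‖Dφ x - (D2 0) x‖ ≤ M3 * ‖x‖ ^ 2 := by
    intro x hx
    have hkd : Differentiable ℝ (fun y => Dφ y - (D2 0) y) :=
      hDφd.sub (D2 0).differentiable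
    have hder : ∀ y : E, fderiv ℝ (fun y => Dφ y - (D2 0) y) y = D2 y - D2 0 := by
      intro y
      rw [fderiv_fun_sub (hDφd y) ((D2 0).differentiable y), (D2 0).fderiv]
    have := mvt_pow (g := fun y => Dφ y - (D2 0) y) hkd 1 hM3nn
      (fun u hu => by rw [hder u]; simpa using hc u hu) hx
    simpa [hDφ0] using this
  -- (e) bound on the even part of Dφ
  have he : ∀ x : E, ‖x‖ ≤ R → ‖Dφ x + Dφ (-x)‖ ≤ 2 * M3 * ‖x‖ ^ 2 := by
    intro x hx
    have h1 := hd x hx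
    have h2 := hd (-x) (by simpa using hx)
    have heq : Dφ x + Dφ (-x) = (Dφ x - (D2 0) x) + (Dφ (-x) - (D2 0) (-x)) := by
      rw [map_neg]; abel
    rw [heq]
    calc ‖(Dφ x - (D2 0) x) + (Dφ (-x) - (D2 0) (-x))‖
        ≤ ‖Dφ x - (D2 0) x‖ + ‖Dφ (-x) - (D2 0) (-x)‖ := norm_add_le _ _
      _ ≤ M3 * ‖x‖ ^ 2 + M3 * ‖-x‖ ^ 2 := add_le_add h1 h2
      _ = 2 * M3 * ‖x‖ ^ 2 := by rw [norm_neg]; ring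
  -- (f) third order bound on the odd part of φ
  have hf : ∀ x : E, ‖x‖ ≤ R → ‖φ x - φ (-x)‖ ≤ 2 * M3 * ‖x‖ ^ 3 := by
    intro x hx
    have hψd : Differentiable ℝ (fun y => φ y - φ (-y)) := by
      apply hφd.sub
      intro y
      exact (hasFDerivAt_comp_neg' (hφd (-y)).hasFDerivAt).differentiableAt
    have hψder : ∀ y : E, fderiv ℝ (fun y => φ y - φ (-y)) y = Dφ y + Dφ (-y) := by
      intro y
      have h1 : HasFDerivAt (fun y => φ y - φ (-y)) (Dφ y - -(Dφ (-y))) y :=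
        (hφd y).hasFDerivAt.sub (hasFDerivAt_comp_neg' (hφd (-y)).hasFDerivAt)
      rw [h1.fderiv]
      abel
    have := mvt_pow (g := fun y => φ y - φ (-y)) (C := 2 * M3) hψd 2 (by linarith)
      (fun u hu => by rw [hψder u]; simpa using he u hu) hx
    simpa [hφ0] using this
  refine ⟨max M2 (2 * M3), le_trans hM2nn (le_max_left _ _), fun x hx => ?_, fun x hx => ?_⟩
  · calc ‖φ x‖ ≤ M2 * ‖x‖ ^ 2 := hb x hx
      _ ≤ max M2 (2 * M3) * ‖x‖ ^ 2 := by gcongr; exact le_max_left _ _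
  · calc ‖φ x - φ (-x)‖ ≤ 2 * M3 * ‖x‖ ^ 3 := hf x hx
      _ ≤ max M2 (2 * M3) * ‖x‖ ^ 3 := by gcongr; exact le_max_right _ _

section Fbound
variable {E₁ E₂ : Type*} [NormedAddCommGroup E₁] [NormedSpace ℝ E₁]
  [NormedAddCommGroup E₂] [NormedSpace ℝ E₂]

lemma norm_inr_le_one : ‖ContinuousLinearMap.inr ℝ E₁ E₂‖ ≤ 1 :=
  ContinuousLinearMap.opNorm_le_bound _ zero_le_one
    (fun w => by simp [ContinuousLinearMap.inr_apply, Prod.norm_def])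

lemma second_order_partial {F : E₁ × E₂ → ℝ} (hFd : Differentiable ℝ F) {M : ℝ} (hM0 : 0 ≤ M)
    (hlip : ∀ p q : E₁ × E₂, ‖fderiv ℝ F p - fderiv ℝ F q‖ ≤ M * ‖p - q‖) (z : E₁) (w : E₂) :
    ‖F (z, w) - F (z, 0) - fderiv ℝ F (z, 0) (0, w)‖ ≤ M * ‖w‖ ^ 2 := by
  classical
  set A := fderiv ℝ F (z, 0) with hA
  set k : E₂ → ℝ := fun w => F (z, w) - A ((0 : E₁), w) with hk
  have hJ : ∀ w : E₂, HasFDerivAt (fun w : E₂ => ((z, w) : E₁ × E₂))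
      (ContinuousLinearMap.inr ℝ E₁ E₂) w := by
    intro w
    exact HasFDerivAt.prodMk (hasFDerivAt_const (𝕜 := ℝ) z w) (hasFDerivAt_id (𝕜 := ℝ) w)
  have hk_der : ∀ w : E₂, HasFDerivAt k
      (((fderiv ℝ F (z, w)).comp (ContinuousLinearMap.inr ℝ E₁ E₂)) -
        A.comp (ContinuousLinearMap.inr ℝ E₁ E₂)) w := by
    intro w
    have h1 : HasFDerivAt (fun w : E₂ => F (z, w))
        ((fderiv ℝ F (z, w)).comp (ContinuousLinearMap.inr ℝ E₁ E₂)) w :=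
      (hFd (z, w)).hasFDerivAt.comp w (hJ w)
    have h2 : HasFDerivAt (fun w : E₂ => A ((0 : E₁), w))
        (A.comp (ContinuousLinearMap.inr ℝ E₁ E₂)) w :=
      (A.comp (ContinuousLinearMap.inr ℝ E₁ E₂)).hasFDerivAt
    exact h1.sub h2
  have hkd : Differentiable ℝ k := fun w => (hk_der w).differentiableAt
  have hbound : ∀ u : E₂, ‖u‖ ≤ ‖w‖ → ‖fderiv ℝ k u‖ ≤ M * ‖u‖ ^ 1 := by
    intro u hu
    rw [(hk_der u).fderiv, ← ContinuousLinearMap.sub_comp]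
    calc ‖(fderiv ℝ F (z, u) - A).comp (ContinuousLinearMap.inr ℝ E₁ E₂)‖
        ≤ ‖fderiv ℝ F (z, u) - A‖ * ‖ContinuousLinearMap.inr ℝ E₁ E₂‖ :=
          ContinuousLinearMap.opNorm_comp_le _ _
      _ ≤ ‖fderiv ℝ F (z, u) - A‖ * 1 :=
          mul_le_mul_of_nonneg_left norm_inr_le_one (norm_nonneg _)
      _ = ‖fderiv ℝ F (z, u) - A‖ := mul_one _
      _ ≤ M * ‖((z, u) : E₁ × E₂) - (z, 0)‖ := hlip _ _
      _ = M * ‖u‖ ^ 1 := by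
          congr 1
          rw [Prod.mk_sub_mk, sub_self, sub_zero, pow_one]
          simp [Prod.norm_def]
  have := mvt_pow (g := k) hkd 1 hM0 hbound (le_refl ‖w‖)
  have hk0 : k 0 = F (z, 0) := by simp [hk, Prod.mk_zero_zero]
  have hkw : k w = F (z, w) - A (0, w) := rfl
  rw [hk0, hkw] at this
  calc ‖F (z, w) - F (z, 0) - A (0, w)‖ = ‖F (z, w) - A (0, w) - F (z, 0)‖ := by ring_nf
    _ ≤ M * ‖w‖ ^ (1 + 1) := this
    _ = M * ‖w‖ ^ 2 := by norm_num

end Fbound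

set_option maxHeartbeats 1000000

/-- Let `φ : ℝ^d → ℝ^{D-d}` be smooth with `φ 0 = 0` and `Dφ 0 = 0`. If
`f : ℝ^D → ℝ` is even, C² and compactly supported, then
`∫_{ℝ^d} f(z, φ(h z)/h) dz = ∫_{ℝ^d} f(z, 0) dz + O(h²)` as `h → 0⁺`. -/
theorem integral_graph_param_eq_integral_add_bigO
    (d D : ℕ) (hd : 1 ≤ d) (hdD : d < D)
    (φ : EuclideanSpace ℝ (Fin d) → EuclideanSpace ℝ (Fin (D - d)))
    (hφ : ContDiff ℝ (⊤ : ℕ∞) φ) (hφ0 : φ 0 = 0) (hDφ0 : fderiv ℝ φ 0 = 0)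
    (f : EuclideanSpace ℝ (Fin D) → ℝ)
    (hfeven : ∀ y, f (-y) = f y) (hf : ContDiff ℝ 2 f) (hfsupp : HasCompactSupport f)
    :
    (fun h : ℝ =>
        (∫ z : EuclideanSpace ℝ (Fin d), f (pairFn d D z ((1 / h) • φ (h • z)))) -
        ∫ z : EuclideanSpace ℝ (Fin d), f (pairFn d D z 0))
      =O[𝓝[>] (0 : ℝ)] fun h : ℝ => h ^ 2 := by
  classical
  set L := pairCLM d D with hL
  set F : (EuclideanSpace ℝ (Fin d)) × (EuclideanSpace ℝ (Fin (D - d))) → ℝ :=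
    fun p => f (L p) with hFdef
  have hFc2 : ContDiff ℝ 2 F := hf.comp L.contDiff
  have hFd : Differentiable ℝ F := hFc2.differentiable (by norm_num)
  have hFeven : ∀ p, F (-p) = F p := fun p => by
    simp only [hFdef, map_neg]; exact hfeven _
  have hnormp : ∀ p : (EuclideanSpace ℝ (Fin d)) × (EuclideanSpace ℝ (Fin (D - d))),
      ‖p‖ ≤ ‖L p‖ := by
    rintro ⟨z, w⟩
    rw [Prod.norm_def]
    exact max_le (norm_fst_le_pair d D hdD.le z w) (norm_snd_le_pair d D z w)
  -- support radius
  obtain ⟨R₀, hR₀⟩ := hfsupp.isBounded.subset_closedBall (0 : EuclideanSpace ℝ (Fin D))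
  set R : ℝ := max R₀ 0 + 1 with hRdef
  have hR1 : (1 : ℝ) ≤ R := by simp [hRdef]
  have hR0 : (0 : ℝ) < R := lt_of_lt_of_le one_pos hR1
  have hfz : ∀ y : EuclideanSpace ℝ (Fin D), max R₀ 0 < ‖y‖ → f y = 0 := by
    intro y hy
    apply image_eq_zero_of_notMem_tsupport
    intro hmem
    have := hR₀ hmem
    rw [mem_closedBall_zero_iff] at this
    have : ‖y‖ ≤ max R₀ 0 := le_trans this (le_max_left _ _)
    linarith
  have hFz : ∀ (z : EuclideanSpace ℝ (Fin d)) (w : EuclideanSpace ℝ (Fin (D - d))),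
      R ≤ ‖z‖ → F (z, w) = 0 := by
    intro z w hz
    apply hfz
    have h1 : ‖z‖ ≤ ‖L (z, w)‖ := norm_fst_le_pair d D hdD.le z w
    have h2 : max R₀ 0 < R := by rw [hRdef]; linarith
    linarith
  have hFsupp : HasCompactSupport F := by
    apply HasCompactSupport.intro (isCompact_closedBall
      (0 : (EuclideanSpace ℝ (Fin d)) × (EuclideanSpace ℝ (Fin (D - d)))) R)
    intro p hp
    apply hfz
    have h1 : R < ‖p‖ := by
      by_contra hcon
      exact hp (mem_closedBall_zero_iff.2 (le_of_not_gt hcon))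
    have h2 := hnormp p
    have h3 : max R₀ 0 < R := by rw [hRdef]; linarith
    linarith
  have hDFz : ∀ z : EuclideanSpace ℝ (Fin d), R ≤ ‖z‖ →
      fderiv ℝ F (z, (0 : EuclideanSpace ℝ (Fin (D - d)))) = 0 := by
    intro z hz
    have hopen : IsOpen {p : (EuclideanSpace ℝ (Fin d)) × (EuclideanSpace ℝ (Fin (D - d))) |
        max R₀ 0 < ‖p.1‖} := isOpen_lt continuous_const (continuous_norm.comp continuous_fst)
    have hev : F =ᶠ[𝓝 ((z, (0 : EuclideanSpace ℝ (Fin (D - d)))) :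
        (EuclideanSpace ℝ (Fin d)) × (EuclideanSpace ℝ (Fin (D - d))))] (fun _ => (0 : ℝ)) := by
      refine Filter.eventuallyEq_of_mem (hopen.mem_nhds ?_) ?_
      · show max R₀ 0 < ‖z‖
        have : max R₀ 0 < R := by rw [hRdef]; linarith
        linarith
      · rintro ⟨z', w'⟩ hp
        apply hfz
        have h1 : ‖z'‖ ≤ ‖L (z', w')‖ := norm_fst_le_pair d D hdD.le z' w'
        exact lt_of_lt_of_le hp h1
    rw [hev.fderiv_eq]
    exact fderiv_const_apply 0
  -- derivative bounds
  have hDFc1 : ContDiff ℝ 1 (fderiv ℝ F) := hFc2.fderiv_right (m := 1) (by norm_num)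
  have hDFd : Differentiable ℝ (fderiv ℝ F) := hDFc1.differentiable (by norm_num)
  have hDFsupp : HasCompactSupport (fderiv ℝ F) := HasCompactSupport.fderiv (𝕜 := ℝ) hFsupp
  obtain ⟨Mg', hMg'⟩ := hDFsupp.exists_bound_of_continuous hDFc1.continuous
  set Mg : ℝ := max Mg' 0 with hMgdef
  have hMgnn : 0 ≤ Mg := le_max_right _ _
  have hMg : ∀ p, ‖fderiv ℝ F p‖ ≤ Mg := fun p => le_trans (hMg' p) (le_max_left _ _)
  have hD2c : Continuous (fderiv ℝ (fderiv ℝ F)) :=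
    (hDFc1.fderiv_right (m := 0) (by norm_num)).continuous
  obtain ⟨M', hM'⟩ := exists_bound_fderiv_of_hasCompactSupport hDFsupp hD2c
  set M : ℝ := max M' 0 with hMdef
  have hMnn : 0 ≤ M := le_max_right _ _
  have hlip : ∀ p q, ‖fderiv ℝ F p - fderiv ℝ F q‖ ≤ M * ‖p - q‖ := by
    intro p q
    exact convex_univ.norm_image_sub_le_of_norm_fderiv_le (fun y _ => hDFd y)
      (fun y _ => le_trans (hM' y) (le_max_left _ _)) (Set.mem_univ q) (Set.mem_univ p)
  have hsecond := second_order_partial hFd hMnn hlip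
  -- φ bounds
  obtain ⟨Cφ, hCφnn, hCφ2, hCφ3⟩ := phi_bounds hφ hφ0 hDφ0 R
  -- volume of the ball
  set V : ℝ := (volume (closedBall (0 : EuclideanSpace ℝ (Fin d)) R)).toReal with hVdef
  have hVnn : 0 ≤ V := ENNReal.toReal_nonneg
  set K : ℝ := M * (Cφ * R ^ 2) ^ 2 * V + Mg * Cφ * R ^ 3 * V with hKdef
  rw [Asymptotics.isBigO_iff]
  refine ⟨K, ?_⟩
  filter_upwards [Ioc_mem_nhdsGT_of_mem (α := ℝ) ⟨le_refl 0, zero_lt_one⟩] with h hh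
  obtain ⟨hh0, hh1⟩ := hh
  have hhne : h ≠ 0 := ne_of_gt hh0
  set wv : EuclideanSpace ℝ (Fin d) → EuclideanSpace ℝ (Fin (D - d)) :=
    fun z => (1 / h) • φ (h • z) with hwvdef
  set u : EuclideanSpace ℝ (Fin d) → ℝ := fun z => F (z, wv z) with hudef
  set v : EuclideanSpace ℝ (Fin d) → ℝ :=
    fun z => F (z, (0 : EuclideanSpace ℝ (Fin (D - d)))) with hvdef
  set gf : EuclideanSpace ℝ (Fin d) → ℝ := fun z =>
    fderiv ℝ F (z, (0 : EuclideanSpace ℝ (Fin (D - d))))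
      ((0 : EuclideanSpace ℝ (Fin d)), wv z) with hgfdef
  -- norm of h • z
  have hnsm : ∀ z : EuclideanSpace ℝ (Fin d), ‖h • z‖ = h * ‖z‖ := by
    intro z
    rw [norm_smul, Real.norm_eq_abs, abs_of_pos hh0]
  have hsmR : ∀ z : EuclideanSpace ℝ (Fin d), ‖z‖ ≤ R → ‖h • z‖ ≤ R := by
    intro z hz
    rw [hnsm z]
    calc h * ‖z‖ ≤ 1 * R := mul_le_mul hh1 hz (norm_nonneg z) zero_le_one
      _ = R := one_mul R
  -- bound on wv
  have hwvb : ∀ z : EuclideanSpace ℝ (Fin d), ‖z‖ ≤ R → ‖wv z‖ ≤ Cφ * R ^ 2 * h := by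
    intro z hz
    have h1 : ‖φ (h • z)‖ ≤ Cφ * ‖h • z‖ ^ 2 := hCφ2 _ (hsmR z hz)
    have h2 : ‖wv z‖ = (1 / h) * ‖φ (h • z)‖ := by
      rw [hwvdef]
      rw [norm_smul, Real.norm_eq_abs, abs_of_pos (by positivity)]
    rw [h2, hnsm z] at *
    calc (1 / h) * ‖φ (h • z)‖ ≤ (1 / h) * (Cφ * (h * ‖z‖) ^ 2) := by
          apply mul_le_mul_of_nonneg_left h1 (by positivity)
      _ = Cφ * ‖z‖ ^ 2 * h := by field_simp
      _ ≤ Cφ * R ^ 2 * h := by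
          apply mul_le_mul_of_nonneg_right _ (le_of_lt hh0)
          apply mul_le_mul_of_nonneg_left _ hCφnn
          exact pow_le_pow_left₀ (norm_nonneg z) hz 2
  -- first pointwise bound
  have hsum : ∀ z : EuclideanSpace ℝ (Fin d), ‖z‖ ≤ R →
      ‖u z - v z - gf z‖ ≤ M * (Cφ * R ^ 2) ^ 2 * h ^ 2 := by
    intro z hz
    refine le_trans (hsecond z (wv z)) ?_
    calc M * ‖wv z‖ ^ 2 ≤ M * (Cφ * R ^ 2 * h) ^ 2 :=
          mul_le_mul_of_nonneg_left
            (pow_le_pow_left₀ (norm_nonneg _) (hwvb z hz) 2) hMnn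
      _ = M * (Cφ * R ^ 2) ^ 2 * h ^ 2 := by ring
  -- second pointwise bound (oddness cancellation)
  have hodd : ∀ z : EuclideanSpace ℝ (Fin d), ‖z‖ ≤ R →
      ‖gf z + gf (-z)‖ ≤ Mg * Cφ * R ^ 3 * h ^ 2 := by
    intro z hz
    have hDFneg : fderiv ℝ F ((-z : EuclideanSpace ℝ (Fin d)),
        (0 : EuclideanSpace ℝ (Fin (D - d)))) =
        -fderiv ℝ F (z, (0 : EuclideanSpace ℝ (Fin (D - d)))) := by
      have h1 := fderiv_neg_of_even hFd hFeven
        ((z, (0 : EuclideanSpace ℝ (Fin (D - d)))) :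
          (EuclideanSpace ℝ (Fin d)) × (EuclideanSpace ℝ (Fin (D - d))))
      simpa using h1
    have hprodsub : (((0 : EuclideanSpace ℝ (Fin d)), (1 / h) • φ (h • z)) -
        ((0 : EuclideanSpace ℝ (Fin d)), (1 / h) • φ (-(h • z)))) =
        ((0 : EuclideanSpace ℝ (Fin d)), (1 / h) • (φ (h • z) - φ (-(h • z)))) := by
      rw [Prod.mk_sub_mk, sub_zero, ← smul_sub]
    have heq : gf z + gf (-z) =
        fderiv ℝ F (z, (0 : EuclideanSpace ℝ (Fin (D - d))))
          ((0 : EuclideanSpace ℝ (Fin d)), (1 / h) • (φ (h • z) - φ (-(h • z)))) := by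
      show fderiv ℝ F (z, 0) (0, (1 / h) • φ (h • z)) +
        fderiv ℝ F (-z, 0) (0, (1 / h) • φ (h • (-z))) = _
      rw [smul_neg h z, hDFneg]
      rw [ContinuousLinearMap.neg_apply, ← sub_eq_add_neg, ← map_sub, hprodsub]
    rw [heq]
    have h3 : ‖φ (h • z) - φ (-(h • z))‖ ≤ Cφ * ‖h • z‖ ^ 3 := hCφ3 _ (hsmR z hz)
    calc ‖fderiv ℝ F (z, (0 : EuclideanSpace ℝ (Fin (D - d))))
          ((0 : EuclideanSpace ℝ (Fin d)), (1 / h) • (φ (h • z) - φ (-(h • z))))‖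
        ≤ ‖fderiv ℝ F (z, (0 : EuclideanSpace ℝ (Fin (D - d))))‖ *
          ‖(((0 : EuclideanSpace ℝ (Fin d)), (1 / h) • (φ (h • z) - φ (-(h • z)))) :
            (EuclideanSpace ℝ (Fin d)) × (EuclideanSpace ℝ (Fin (D - d))))‖ :=
          ContinuousLinearMap.le_opNorm _ _
      _ ≤ Mg * ((1 / h) * ‖φ (h • z) - φ (-(h • z))‖) := by
          apply mul_le_mul (hMg _) _ (norm_nonneg _) hMgnn
          rw [Prod.norm_def]
          simp only [norm_zero]
          rw [max_eq_right (norm_nonneg _)]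
          rw [norm_smul, Real.norm_eq_abs, abs_of_pos (by positivity)]
      _ ≤ Mg * ((1 / h) * (Cφ * (h * ‖z‖) ^ 3)) := by
          apply mul_le_mul_of_nonneg_left _ hMgnn
          apply mul_le_mul_of_nonneg_left _ (by positivity)
          rw [← hnsm z]
          exact h3
      _ = Mg * Cφ * ‖z‖ ^ 3 * h ^ 2 := by field_simp
      _ ≤ Mg * Cφ * R ^ 3 * h ^ 2 := by
          apply mul_le_mul_of_nonneg_right _ (by positivity)
          apply mul_le_mul_of_nonneg_left _ (by positivity)
          exact pow_le_pow_left₀ (norm_nonneg z) hz 3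
  -- continuity
  have hwvc : Continuous wv :=
    ((hφ.continuous).comp (continuous_id.const_smul h)).const_smul (1 / h)
  have huc : Continuous u := hFc2.continuous.comp (continuous_id.prodMk hwvc)
  have hvc : Continuous v := hFc2.continuous.comp (continuous_id.prodMk continuous_const)
  have hgfc : Continuous gf :=
    (hDFc1.continuous.comp (continuous_id.prodMk continuous_const)).clm_apply
      (continuous_const.prodMk hwvc)
  -- supports
  have husupp : ∀ z ∉ closedBall (0 : EuclideanSpace ℝ (Fin d)) R, u z = 0 := by
    intro z hz
    rw [mem_closedBall_zero_iff] at hz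
    exact hFz z _ (le_of_lt (lt_of_not_ge hz))
  have hvsupp : ∀ z ∉ closedBall (0 : EuclideanSpace ℝ (Fin d)) R, v z = 0 := by
    intro z hz
    rw [mem_closedBall_zero_iff] at hz
    exact hFz z _ (le_of_lt (lt_of_not_ge hz))
  have hgfsupp : ∀ z ∉ closedBall (0 : EuclideanSpace ℝ (Fin d)) R, gf z = 0 := by
    intro z hz
    rw [mem_closedBall_zero_iff] at hz
    show fderiv ℝ F (z, 0) (0, wv z) = 0
    rw [hDFz z (le_of_lt (lt_of_not_ge hz))]
    rfl
  have hgfnegsupp : ∀ z ∉ closedBall (0 : EuclideanSpace ℝ (Fin d)) R, gf (-z) = 0 := by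
    intro z hz
    apply hgfsupp
    rw [mem_closedBall_zero_iff] at hz ⊢
    simpa using hz
  -- integrability
  have hK : IsCompact (closedBall (0 : EuclideanSpace ℝ (Fin d)) R) := isCompact_closedBall _ _
  have huint : Integrable u := huc.integrable_of_hasCompactSupport
    (HasCompactSupport.intro hK husupp)
  have hvint : Integrable v := hvc.integrable_of_hasCompactSupport
    (HasCompactSupport.intro hK hvsupp)
  have hgfint : Integrable gf := hgfc.integrable_of_hasCompactSupport
    (HasCompactSupport.intro hK hgfsupp)
  have hgfnegint : Integrable (fun z => gf (-z)) :=
    (hgfc.comp continuous_neg).integrable_of_hasCompactSupport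
      (HasCompactSupport.intro hK hgfnegsupp)
  -- rewrite the goal
  have hgoal1 : (∫ z : EuclideanSpace ℝ (Fin d), f (pairFn d D z ((1 / h) • φ (h • z)))) =
      ∫ z, u z := rfl
  have hgoal2 : (∫ z : EuclideanSpace ℝ (Fin d), f (pairFn d D z 0)) = ∫ z, v z := rfl
  rw [hgoal1, hgoal2]
  -- split the integral
  have hi1 : Integrable (fun z => u z - v z) volume := huint.sub hvint
  have e1 : ∫ z, (u z - v z - gf z) = (∫ z, (u z - v z)) - ∫ z, gf z :=
    integral_sub hi1 hgfint
  have e2 : ∫ z, (u z - v z) = (∫ z, u z) - ∫ z, v z := integral_sub huint hvint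
  have hsplit : (∫ z, u z) - (∫ z, v z) =
      (∫ z, (u z - v z - gf z)) + ∫ z, gf z := by
    rw [e1, e2]
    ring
  -- bound the first piece
  have hbound1 : ‖∫ z, (u z - v z - gf z)‖ ≤ M * (Cφ * R ^ 2) ^ 2 * h ^ 2 * V := by
    rw [← setIntegral_eq_integral_of_forall_compl_eq_zero
      (s := closedBall (0 : EuclideanSpace ℝ (Fin d)) R) (fun z hz => by
        rw [husupp z hz, hvsupp z hz, hgfsupp z hz]; ring)]
    exact norm_setIntegral_le_of_norm_le_const measure_closedBall_lt_top
      (fun z hz => hsum z (mem_closedBall_zero_iff.1 hz))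
  -- bound the second piece
  have h2g : (2 : ℝ) * ∫ z, gf z = ∫ z, (gf z + gf (-z)) := by
    rw [integral_add hgfint hgfnegint, integral_neg_eq_self gf volume, two_mul]
  have hbound2' : ‖∫ z, (gf z + gf (-z))‖ ≤ Mg * Cφ * R ^ 3 * h ^ 2 * V := by
    rw [← setIntegral_eq_integral_of_forall_compl_eq_zero
      (s := closedBall (0 : EuclideanSpace ℝ (Fin d)) R) (fun z hz => by
        rw [hgfsupp z hz, hgfnegsupp z hz]; ring)]
    exact norm_setIntegral_le_of_norm_le_const measure_closedBall_lt_top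
      (fun z hz => hodd z (mem_closedBall_zero_iff.1 hz))
  have hbound2 : ‖∫ z, gf z‖ ≤ Mg * Cφ * R ^ 3 * h ^ 2 * V := by
    have h4 : ‖(2 : ℝ) * ∫ z, gf z‖ = 2 * ‖∫ z, gf z‖ := by
      rw [norm_mul]
      norm_num
    have h5 : 2 * ‖∫ z, gf z‖ ≤ Mg * Cφ * R ^ 3 * h ^ 2 * V := by
      rw [← h4, h2g]
      exact hbound2'
    have h6 : 0 ≤ ‖∫ z, gf z‖ := norm_nonneg _
    linarith
  -- conclude
  have hfinal : ‖(∫ z, u z) - ∫ z, v z‖ ≤ K * h ^ 2 := by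
    rw [hsplit]
    calc ‖(∫ z, (u z - v z - gf z)) + ∫ z, gf z‖
        ≤ ‖∫ z, (u z - v z - gf z)‖ + ‖∫ z, gf z‖ := norm_add_le _ _
      _ ≤ M * (Cφ * R ^ 2) ^ 2 * h ^ 2 * V + Mg * Cφ * R ^ 3 * h ^ 2 * V :=
          add_le_add hbound1 hbound2
      _ = K * h ^ 2 := by rw [hKdef]; ring
  calc ‖(∫ z, u z) - ∫ z, v z‖ ≤ K * h ^ 2 := hfinal
    _ = K * ‖h ^ 2‖ := by
        rw [Real.norm_eq_abs, abs_of_nonneg (by positivity)]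
end Phi
end

section
/- Let f : ℝ^D → ℝ be even, twice continuously differentiable and compactly supported, and let v ∈ ℝ^D. Then ∫_{Ω_φ/h} f(y) ⟨v, y⟩ dH^d(y) = O(h) as h → 0⁺, where ⟨·,·⟩ is the Euclidean inner product. -/
open MeasureTheory Filter Asymptotics Topology
open scoped ENNReal NNReal

section Aux
open Set
variable {d D : ℕ}

lemma pairFn_sub (z z' : EuclideanSpace ℝ (Fin d)) (w w' : EuclideanSpace ℝ (Fin (D - d))) :
    pairFn d D (z - z') (w - w') = pairFn d D z w - pairFn d D z' w' := by
  ext i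
  simp only [pairFn, PiLp.sub_apply, PiLp.toLp_apply]
  split <;> simp

lemma pairFn_neg (z : EuclideanSpace ℝ (Fin d)) (w : EuclideanSpace ℝ (Fin (D - d))) :
    pairFn d D (-z) (-w) = -pairFn d D z w := by
  ext i
  simp only [pairFn, PiLp.neg_apply, PiLp.toLp_apply]
  split <;> simp

lemma pairFn_smul (c : ℝ) (z : EuclideanSpace ℝ (Fin d)) (w : EuclideanSpace ℝ (Fin (D - d))) :
    pairFn d D (c • z) (c • w) = c • pairFn d D z w := by
  ext i
  simp only [pairFn, PiLp.smul_apply, smul_eq_mul, PiLp.toLp_apply]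
  split <;> simp

lemma pairFn_split (z : EuclideanSpace ℝ (Fin d)) (w : EuclideanSpace ℝ (Fin (D - d))) :
    pairFn d D z w = pairFn d D z 0 + pairFn d D 0 w := by
  ext i
  simp only [pairFn, PiLp.add_apply, PiLp.toLp_apply]
  split <;> simp

lemma pairFn_norm_sq (hdD : d ≤ D) (z : EuclideanSpace ℝ (Fin d))
    (w : EuclideanSpace ℝ (Fin (D - d))) :
    ‖pairFn d D z w‖ ^ 2 = ‖z‖ ^ 2 + ‖w‖ ^ 2 := by
  have key : ∑ i : Fin D, ‖pairFn d D z w i‖ ^ 2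
      = (∑ i : Fin d, ‖z i‖ ^ 2) + ∑ j : Fin (D - d), ‖w j‖ ^ 2 := by
    have hD : d + (D - d) = D := by omega
    have := (finCongr hD).sum_comp (fun i => ‖pairFn d D z w i‖ ^ 2)
    rw [← this, Fin.sum_univ_add]
    congr 1
    · refine Finset.sum_congr rfl fun i _ => ?_
      have h2 : ((finCongr hD) (Fin.castAdd (D - d) i) : ℕ) < d := i.isLt
      simp only [pairFn, dif_pos h2]
      congr 1
    · refine Finset.sum_congr rfl fun j _ => ?_
      have h1 : ((finCongr hD) (Fin.natAdd d j) : ℕ) = d + (j : ℕ) := rfl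
      have h2 : ¬ ((finCongr hD) (Fin.natAdd d j) : ℕ) < d := by omega
      simp only [pairFn, dif_neg h2]
      have h3 : (⟨((finCongr hD) (Fin.natAdd d j) : ℕ) - d, by omega⟩ : Fin (D - d)) = j :=
        Fin.ext (by simp [h1])
      rw [h3]
  rw [EuclideanSpace.norm_eq, EuclideanSpace.norm_eq, EuclideanSpace.norm_eq,
    Real.sq_sqrt (by positivity), Real.sq_sqrt (by positivity), Real.sq_sqrt (by positivity)]
  exact key

lemma pairFn_norm_zero_right (hdD : d ≤ D) (z : EuclideanSpace ℝ (Fin d)) :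
    ‖pairFn d D z 0‖ = ‖z‖ := by
  have := pairFn_norm_sq hdD z 0
  simp only [norm_zero, ne_eq, OfNat.ofNat_ne_zero, not_false_eq_true, zero_pow, add_zero] at this
  nlinarith [norm_nonneg (pairFn d D z 0), norm_nonneg z]

lemma pairFn_norm_zero_left (hdD : d ≤ D) (w : EuclideanSpace ℝ (Fin (D - d))) :
    ‖pairFn d D 0 w‖ = ‖w‖ := by
  have := pairFn_norm_sq hdD 0 w
  simp only [norm_zero, ne_eq, OfNat.ofNat_ne_zero, not_false_eq_true, zero_pow, zero_add] at this
  nlinarith [norm_nonneg (pairFn d D 0 w), norm_nonneg w]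

lemma norm_fst_le_pairFn (hdD : d ≤ D) (z : EuclideanSpace ℝ (Fin d))
    (w : EuclideanSpace ℝ (Fin (D - d))) : ‖z‖ ≤ ‖pairFn d D z w‖ := by
  have := pairFn_norm_sq hdD z w
  nlinarith [norm_nonneg (pairFn d D z w), norm_nonneg z, sq_nonneg ‖w‖]

lemma norm_pairFn_le (hdD : d ≤ D) (z : EuclideanSpace ℝ (Fin d))
    (w : EuclideanSpace ℝ (Fin (D - d))) : ‖pairFn d D z w‖ ≤ ‖z‖ + ‖w‖ := by
  rw [pairFn_split]
  refine (norm_add_le _ _).trans ?_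
  rw [pairFn_norm_zero_right hdD, pairFn_norm_zero_left hdD]

lemma continuous_pairFn {X : Type*} [TopologicalSpace X]
    {F : X → EuclideanSpace ℝ (Fin d)} {G : X → EuclideanSpace ℝ (Fin (D - d))}
    (hF : Continuous F) (hG : Continuous G) :
    Continuous fun x => pairFn d D (F x) (G x) := by
  have : (fun x => pairFn d D (F x) (G x))
      = (EuclideanSpace.equiv (Fin D) ℝ).symm ∘ fun x i =>
        if h : (i : ℕ) < d then F x ⟨(i : ℕ), h⟩
        else G x ⟨(i : ℕ) - d, by have := i.isLt; omega⟩ := by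
    funext x; rfl
  rw [this]
  refine (EuclideanSpace.equiv (Fin D) ℝ).symm.continuous.comp ?_
  refine continuous_pi fun i => ?_
  split
  · exact (EuclideanSpace.proj _).continuous.comp hF
  · exact (EuclideanSpace.proj _).continuous.comp hG

end Aux

set_option maxHeartbeats 1000000 in
/-- Let `φ : ℝ^d → ℝ^{D-d}` be smooth with `φ 0 = 0` and `Dφ 0 = 0`, and let
`Ω_φ = {(z, φ z)}` be its graph. If `f : ℝ^D → ℝ` is even, C² and compactly supported, and
`v ∈ ℝ^D`, then `∫_{Ω_φ/h} f(y) ⟨v, y⟩ dH^d(y) = O(h)` as `h → 0⁺`. -/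
theorem integral_blowup_graph_inner_isBigO
    (d D : ℕ) (hd : 1 ≤ d) (hdD : d < D)
    (φ : EuclideanSpace ℝ (Fin d) → EuclideanSpace ℝ (Fin (D - d)))
    (hφ : ContDiff ℝ (⊤ : ℕ∞) φ) (hφ0 : φ 0 = 0) (hDφ0 : fderiv ℝ φ 0 = 0)
    (f : EuclideanSpace ℝ (Fin D) → ℝ)
    (hfeven : ∀ y, f (-y) = f y) (hf : ContDiff ℝ 2 f) (hfsupp : HasCompactSupport f)
    (v : EuclideanSpace ℝ (Fin D)) :
    (fun h : ℝ =>
        ∫ y in {y : EuclideanSpace ℝ (Fin D) |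
            ∃ z : EuclideanSpace ℝ (Fin d), pairFn d D z (φ z) = h • y},
          f y * (inner ℝ v y : ℝ) ∂(μH[(d : ℝ)]))
      =O[𝓝[>] (0 : ℝ)] fun h : ℝ => h := by
  have hdD' : d ≤ D := hdD.le
  have hd0 : (0 : ℝ) ≤ (d : ℝ) := Nat.cast_nonneg d
  -- a radius containing the support of f
  obtain ⟨r0, hr0⟩ := hfsupp.isBounded.subset_closedBall 0
  obtain ⟨R, hR1, hsuppR⟩ : ∃ R : ℝ, 1 ≤ R ∧ tsupport f ⊆ Metric.closedBall 0 R :=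
    ⟨max r0 1, le_max_right _ _,
      hr0.trans (Metric.closedBall_subset_closedBall (le_max_left _ _))⟩
  have hR0 : (0 : ℝ) < R := lt_of_lt_of_le one_pos hR1
  -- quadratic bounds for φ near 0
  obtain ⟨M, hM0, hDφ_bound⟩ : ∃ M : ℝ, 0 ≤ M ∧
      ∀ x : EuclideanSpace ℝ (Fin d), ‖x‖ ≤ 1 → ‖fderiv ℝ φ x‖ ≤ M * ‖x‖ := by
    have hDφ : ContDiff ℝ (⊤ : ℕ∞) (fderiv ℝ φ) := hφ.fderiv_right (m := (⊤ : ℕ∞)) (by simp)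
    obtain ⟨M₀, hM₀⟩ := (isCompact_closedBall (0 : EuclideanSpace ℝ (Fin d))
      1).exists_bound_of_continuousOn (hDφ.fderiv_right (m := (⊤ : ℕ∞)) (by simp)).continuous.continuousOn
    refine ⟨max M₀ 0, le_max_right _ _, fun x hx => ?_⟩
    have hdiffDφ : Differentiable ℝ (fderiv ℝ φ) := hDφ.differentiable (by simp)
    have hkey := (convex_closedBall (0 : EuclideanSpace ℝ (Fin d))
        1).norm_image_sub_le_of_norm_fderiv_le
      (fun u _ => hdiffDφ.differentiableAt)
      (fun u hu => (hM₀ u hu).trans (le_max_left M₀ 0))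
      (Metric.mem_closedBall_self zero_le_one)
      (Metric.mem_closedBall.2 (by rwa [dist_zero_right]))
    rwa [hDφ0, sub_zero, sub_zero] at hkey
  have hφ_lip : ∀ r : ℝ, 0 ≤ r → r ≤ 1 →
      ∀ x ∈ Metric.closedBall (0 : EuclideanSpace ℝ (Fin d)) r,
      ∀ y ∈ Metric.closedBall (0 : EuclideanSpace ℝ (Fin d)) r,
      ‖φ x - φ y‖ ≤ M * r * ‖x - y‖ := by
    intro r hr hr1 x hx y hy
    refine (convex_closedBall (0 : EuclideanSpace ℝ (Fin d))
        r).norm_image_sub_le_of_norm_fderiv_le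
      (fun u _ => (hφ.differentiable (by simp)).differentiableAt)
      (fun u hu => ?_) hy hx
    have hu' : ‖u‖ ≤ r := by simpa [Metric.mem_closedBall, dist_zero_right] using hu
    exact (hDφ_bound u (hu'.trans hr1)).trans (by nlinarith)
  have hφ_bound : ∀ x : EuclideanSpace ℝ (Fin d), ‖x‖ ≤ 1 → ‖φ x‖ ≤ M * ‖x‖ ^ 2 := by
    intro x hx
    have hmem1 : x ∈ Metric.closedBall (0 : EuclideanSpace ℝ (Fin d)) ‖x‖ :=
      Metric.mem_closedBall.2 (by rw [dist_zero_right])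
    have hmem0 : (0 : EuclideanSpace ℝ (Fin d)) ∈ Metric.closedBall (0 :
        EuclideanSpace ℝ (Fin d)) ‖x‖ :=
      Metric.mem_closedBall_self (norm_nonneg x)
    have hkey := hφ_lip ‖x‖ (norm_nonneg x) hx x hmem1 0 hmem0
    rw [hφ0, sub_zero, sub_zero] at hkey
    calc ‖φ x‖ ≤ M * ‖x‖ * ‖x‖ := hkey
      _ = M * ‖x‖ ^ 2 := by ring
  -- global bounds for f
  obtain ⟨Cf, hCf⟩ := hfsupp.exists_bound_of_continuous hf.continuous
  have hCf0 : 0 ≤ Cf := (norm_nonneg _).trans (hCf 0)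
  obtain ⟨Lf, hLf⟩ := ContDiff.lipschitzWith_of_hasCompactSupport hfsupp hf (by norm_num)
  -- Hausdorff measure on ℝ^d is a Haar measure
  haveI hHaar : (μH[(d : ℝ)] : Measure (EuclideanSpace ℝ (Fin d))).IsAddHaarMeasure := by
    have hfr : ((d : ℕ) : ℝ)
        = ((Module.finrank ℝ (EuclideanSpace ℝ (Fin d)) : ℕ) : ℝ) := by simp
    rw [hfr]; infer_instance
  -- main quantitative bound
  have key : ∃ A Bc MR : ℝ, 0 ≤ A ∧ 0 ≤ Bc ∧ 0 ≤ MR ∧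
      ∀ h : ℝ, 0 < h → h ≤ 1 → h * R ≤ 1 →
      ‖∫ y in {y : EuclideanSpace ℝ (Fin D) |
            ∃ z : EuclideanSpace ℝ (Fin d), pairFn d D z (φ z) = h • y},
          f y * (inner ℝ v y : ℝ) ∂(μH[(d : ℝ)])‖
        ≤ A * h + Bc * ((1 + MR * h) ^ d - 1) := by
    set μ : Measure (EuclideanSpace ℝ (Fin D)) := μH[(d : ℝ)] with hμdef
    set μd : Measure (EuclideanSpace ℝ (Fin d)) := μH[(d : ℝ)] with hμddef
    set g : EuclideanSpace ℝ (Fin D) → ℝ := fun y => f y * (inner ℝ v y : ℝ) with hgdef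
    have hg_cont : Continuous g := hf.continuous.mul (continuous_const.inner continuous_id)
    set Cg : ℝ := Cf * (‖v‖ * R) with hCgdef
    have hCg0 : 0 ≤ Cg := by positivity
    have hg_bound : ∀ y : EuclideanSpace ℝ (Fin D), ‖g y‖ ≤ Cg := by
      intro y
      by_cases hy : ‖y‖ ≤ R
      · have h1 : |f y| ≤ Cf := by simpa [Real.norm_eq_abs] using hCf y
        have h2 : |(inner ℝ v y : ℝ)| ≤ ‖v‖ * ‖y‖ := abs_real_inner_le_norm v y
        have h3 : ‖v‖ * ‖y‖ ≤ ‖v‖ * R := mul_le_mul_of_nonneg_left hy (norm_nonneg v)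
        calc ‖g y‖ = |f y| * |(inner ℝ v y : ℝ)| := by
              simp [hgdef, Real.norm_eq_abs, abs_mul]
          _ ≤ Cf * (‖v‖ * R) := mul_le_mul h1 (h2.trans h3) (abs_nonneg _) hCf0
      · have hfy : f y = 0 := by
          refine image_eq_zero_of_notMem_tsupport fun hmem => hy ?_
          simpa [Metric.mem_closedBall, dist_zero_right] using hsuppR hmem
        simp [hgdef, hfy, hCg0]
    set B : Set (EuclideanSpace ℝ (Fin d)) := Metric.closedBall 0 R with hBdef
    set CD : Set (EuclideanSpace ℝ (Fin D)) := Metric.closedBall 0 R with hCDdef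
    have hBfin : μd B < ⊤ := (isCompact_closedBall _ _).measure_lt_top
    set cB : ℝ := (μd B).toReal with hcBdef
    have hcB0 : 0 ≤ cB := ENNReal.toReal_nonneg
    set K₂ : ℝ := (Cf * ‖v‖ + (Lf : ℝ) * ‖v‖ * R) * (M * R ^ 2) with hK2def
    have hK20 : 0 ≤ K₂ := by positivity
    -- the flat comparison integrand has vanishing integral, by oddness
    set F : EuclideanSpace ℝ (Fin d) → ℝ := fun z => g (pairFn d D z 0) with hFdef
    have hF_cont : Continuous F :=
      hg_cont.comp (continuous_pairFn continuous_id continuous_const)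
    have hzeroF : ∫ z in B, F z ∂μd = 0 := by
      have mp : MeasurePreserving (fun z : EuclideanSpace ℝ (Fin d) => -z) μd μd := by
        refine ⟨measurable_neg, ?_⟩
        have hiso : Isometry (fun z : EuclideanSpace ℝ (Fin d) => -z) := isometry_neg
        rw [hμddef, hiso.map_hausdorffMeasure (Or.inr neg_surjective)]
        have hrange : Set.range (fun z : EuclideanSpace ℝ (Fin d) => -z) = Set.univ :=
          neg_surjective.range_eq
        rw [hrange, Measure.restrict_univ]
      have hemb : MeasurableEmbedding (fun z : EuclideanSpace ℝ (Fin d) => -z) :=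
        (Homeomorph.neg (EuclideanSpace ℝ (Fin d))).measurableEmbedding
      have hnegB : (fun z : EuclideanSpace ℝ (Fin d) => -z) ⁻¹' B = B := by
        ext z; simp [hBdef, Metric.mem_closedBall, dist_zero_right]
      have hkey := mp.setIntegral_preimage_emb hemb F B
      rw [hnegB] at hkey
      have hFodd : ∀ z : EuclideanSpace ℝ (Fin d), F (-z) = -F z := by
        intro z
        have h1 := pairFn_neg z (0 : EuclideanSpace ℝ (Fin (D - d)))
        rw [neg_zero] at h1
        simp only [hFdef, hgdef, h1, hfeven, inner_neg_right, mul_neg]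
      simp only [hFodd] at hkey
      rw [integral_neg] at hkey
      linarith
    refine ⟨K₂ * cB, Cg * cB, M * R, by positivity, by positivity, by positivity,
      fun h hh0 hh1 hhR => ?_⟩
    have hh0' : h ≠ 0 := ne_of_gt hh0
    set w : EuclideanSpace ℝ (Fin d) → EuclideanSpace ℝ (Fin (D - d)) :=
      fun z => h⁻¹ • φ (h • z) with hwdef
    set ψ : EuclideanSpace ℝ (Fin d) → EuclideanSpace ℝ (Fin D) :=
      fun z => pairFn d D z (w z) with hψdef
    have hψc : Continuous ψ := by
      refine continuous_pairFn continuous_id ?_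
      exact (hφ.continuous.comp (continuous_id.const_smul h)).const_smul h⁻¹
    have hw_bound : ∀ z : EuclideanSpace ℝ (Fin d), ‖z‖ ≤ R → ‖w z‖ ≤ M * h * R ^ 2 := by
      intro z hz
      have hhz : ‖h • z‖ ≤ 1 := by
        rw [norm_smul, Real.norm_eq_abs, abs_of_pos hh0]
        nlinarith
      have hb1 := hφ_bound (h • z) hhz
      rw [norm_smul, Real.norm_eq_abs, abs_of_pos hh0] at hb1
      have hzR : h * ‖z‖ ≤ h * R := mul_le_mul_of_nonneg_left hz hh0.le
      have hsq : (h * ‖z‖) ^ 2 ≤ (h * R) ^ 2 := by nlinarith [hzR, mul_nonneg hh0.le (norm_nonneg z)]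
      have hb2 : ‖φ (h • z)‖ ≤ M * (h * R) ^ 2 :=
        hb1.trans (mul_le_mul_of_nonneg_left hsq hM0)
      have hwz' : ‖w z‖ = h⁻¹ * ‖φ (h • z)‖ := by
        show ‖h⁻¹ • φ (h • z)‖ = _
        rw [norm_smul, Real.norm_eq_abs, abs_of_pos (inv_pos.2 hh0)]
      calc ‖w z‖ = h⁻¹ * ‖φ (h • z)‖ := hwz'
        _ ≤ h⁻¹ * (M * (h * R) ^ 2) :=
            mul_le_mul_of_nonneg_left hb2 (le_of_lt (inv_pos.2 hh0))
        _ = M * h * R ^ 2 := by field_simp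
    have hψ_sub : ∀ z z' : EuclideanSpace ℝ (Fin d),
        ψ z - ψ z' = pairFn d D (z - z') (w z - w z') := by
      intro z z'; rw [pairFn_sub]
    have hanti : AntilipschitzWith 1 ψ := by
      refine AntilipschitzWith.of_le_mul_dist fun z z' => ?_
      rw [dist_eq_norm, dist_eq_norm, NNReal.coe_one, one_mul]
      have hle := norm_fst_le_pairFn hdD' (z - z') (w z - w z')
      rw [← hψ_sub z z'] at hle
      exact hle
    set L : ℝ≥0 := Real.toNNReal (1 + M * R * h) with hLdef
    have hL1 : (0 : ℝ) ≤ 1 + M * R * h := by nlinarith [mul_nonneg (mul_nonneg hM0 hR0.le) hh0.le]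
    have hL_coe : (L : ℝ) = 1 + M * R * h := Real.coe_toNNReal _ hL1
    have hψ_lip : LipschitzOnWith L ψ B := by
      refine LipschitzOnWith.of_dist_le_mul fun z hz z' hz' => ?_
      have hz1 : ‖z‖ ≤ R := by simpa [hBdef, Metric.mem_closedBall, dist_zero_right] using hz
      have hz2 : ‖z'‖ ≤ R := by
        simpa [hBdef, Metric.mem_closedBall, dist_zero_right] using hz'
      have hwlip : ‖w z - w z'‖ ≤ M * R * h * ‖z - z'‖ := by
        have hmem1 : h • z ∈ Metric.closedBall (0 : EuclideanSpace ℝ (Fin d)) (h * R) := by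
          simp only [Metric.mem_closedBall, dist_zero_right, norm_smul,
            Real.norm_eq_abs, abs_of_pos hh0]
          nlinarith
        have hmem2 : h • z' ∈ Metric.closedBall (0 : EuclideanSpace ℝ (Fin d)) (h * R) := by
          simp only [Metric.mem_closedBall, dist_zero_right, norm_smul,
            Real.norm_eq_abs, abs_of_pos hh0]
          nlinarith
        have hl := hφ_lip (h * R) (by positivity) hhR (h • z) hmem1 (h • z') hmem2
        have hsm : h • z - h • z' = h • (z - z') := by rw [smul_sub]
        rw [hsm, norm_smul, Real.norm_eq_abs, abs_of_pos hh0] at hl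
        have hw' : w z - w z' = h⁻¹ • (φ (h • z) - φ (h • z')) := by
          rw [hwdef]; simp [smul_sub]
        rw [hw', norm_smul, Real.norm_eq_abs, abs_of_pos (inv_pos.2 hh0)]
        calc h⁻¹ * ‖φ (h • z) - φ (h • z')‖
            ≤ h⁻¹ * (M * (h * R) * (h * ‖z - z'‖)) :=
              mul_le_mul_of_nonneg_left hl (le_of_lt (inv_pos.2 hh0))
          _ = M * R * h * ‖z - z'‖ := by field_simp
      rw [dist_eq_norm, dist_eq_norm, hψ_sub z z', hL_coe]
      calc ‖pairFn d D (z - z') (w z - w z')‖ ≤ ‖z - z'‖ + ‖w z - w z'‖ :=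
            norm_pairFn_le hdD' _ _
        _ ≤ ‖z - z'‖ + M * R * h * ‖z - z'‖ := by linarith
        _ = (1 + M * R * h) * ‖z - z'‖ := by ring
    set S : Set (EuclideanSpace ℝ (Fin D)) :=
      {y : EuclideanSpace ℝ (Fin D) |
        ∃ z : EuclideanSpace ℝ (Fin d), pairFn d D z (φ z) = h • y} with hSdef
    have hψ_eq : ∀ u : EuclideanSpace ℝ (Fin d),
        h • ψ u = pairFn d D (h • u) (φ (h • u)) := by
      intro u
      rw [hψdef]
      simp only
      rw [← pairFn_smul]
      congr 1
      rw [hwdef]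
      simp [smul_smul, mul_inv_cancel₀ hh0']
    have hSC : S ∩ CD = (ψ '' B) ∩ CD := by
      ext y
      constructor
      · rintro ⟨⟨z, hz⟩, hyC⟩
        have hy' : ψ (h⁻¹ • z) = y := by
          have h1 := hψ_eq (h⁻¹ • z)
          rw [smul_inv_smul₀ hh0', hz] at h1
          exact smul_right_injective (EuclideanSpace ℝ (Fin D)) hh0' h1
        have hyR : ‖y‖ ≤ R := by
          simpa [hCDdef, Metric.mem_closedBall, dist_zero_right] using hyC
        have hmem : h⁻¹ • z ∈ B := by
          have h2 : ‖h⁻¹ • z‖ ≤ ‖ψ (h⁻¹ • z)‖ := norm_fst_le_pairFn hdD' _ _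
          rw [hy'] at h2
          simp only [hBdef, Metric.mem_closedBall, dist_zero_right]
          exact h2.trans hyR
        exact ⟨⟨h⁻¹ • z, hmem, hy'⟩, hyC⟩
      · rintro ⟨⟨u, huB, rfl⟩, hyC⟩
        exact ⟨⟨h • u, (hψ_eq u).symm⟩, hyC⟩
    -- reduce to the image of the ball
    set ψB : Set (EuclideanSpace ℝ (Fin D)) := ψ '' B with hψBdef
    have hψBm : MeasurableSet ψB :=
      ((isCompact_closedBall (0 : EuclideanSpace ℝ (Fin d)) R).image hψc).measurableSet
    have hgfun : g = Set.indicator CD g := by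
      funext y
      by_cases hy : y ∈ CD
      · rw [Set.indicator_of_mem hy]
      · rw [Set.indicator_of_notMem hy]
        have : f y = 0 := image_eq_zero_of_notMem_tsupport fun hmem => hy (hsuppR hmem)
        simp [hgdef, this]
    have hμ1 : ∫ y in S, g y ∂μ = ∫ y in ψB, g y ∂μ := by
      calc ∫ y in S, g y ∂μ = ∫ y in S, Set.indicator CD g y ∂μ := by rw [← hgfun]
        _ = ∫ y in S ∩ CD, g y ∂μ := setIntegral_indicator Metric.isClosed_closedBall.measurableSet
        _ = ∫ y in ψB ∩ CD, g y ∂μ := by rw [hSC]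
        _ = ∫ y in ψB, Set.indicator CD g y ∂μ :=
            (setIntegral_indicator Metric.isClosed_closedBall.measurableSet).symm
        _ = ∫ y in ψB, g y ∂μ := by rw [← hgfun]
    -- the comparison measure
    set ν : Measure (EuclideanSpace ℝ (Fin D)) := Measure.map ψ (μd.restrict B) with hνdef
    have hν_apply : ∀ Aset : Set (EuclideanSpace ℝ (Fin D)), MeasurableSet Aset →
        ν Aset = μd (ψ ⁻¹' Aset ∩ B) := by
      intro Aset hA
      rw [hνdef, Measure.map_apply hψc.measurable hA,
        Measure.restrict_apply (hψc.measurable hA)]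
    have hν_le : ν ≤ μ.restrict ψB := by
      refine Measure.le_iff.2 fun Aset hA => ?_
      rw [hν_apply Aset hA, Measure.restrict_apply hA]
      have himg : ψ '' (ψ ⁻¹' Aset ∩ B) = Aset ∩ ψB := by
        rw [Set.inter_comm, Set.image_inter_preimage, hψBdef, Set.inter_comm]
      have hle := hanti.le_hausdorffMeasure_image hd0 (ψ ⁻¹' Aset ∩ B)
      rw [himg] at hle
      simpa [hμdef, hμddef] using hle
    have hup : ∀ Aset : Set (EuclideanSpace ℝ (Fin D)), MeasurableSet Aset →
        (μ.restrict ψB) Aset ≤ (L : ℝ≥0∞) ^ (d : ℝ) * ν Aset := by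
      intro Aset hA
      rw [Measure.restrict_apply hA, hν_apply Aset hA]
      have himg : Aset ∩ ψB = ψ '' (ψ ⁻¹' Aset ∩ B) := by
        rw [Set.inter_comm (ψ ⁻¹' Aset) B, Set.image_inter_preimage, hψBdef, Set.inter_comm]
      rw [himg]
      have hle := (hψ_lip.mono
        (Set.inter_subset_right : ψ ⁻¹' Aset ∩ B ⊆ B)).hausdorffMeasure_image_le hd0
      simpa [hμdef, hμddef] using hle
    haveI hνfin : IsFiniteMeasure ν := by
      constructor
      rw [hνdef, Measure.map_apply hψc.measurable MeasurableSet.univ, Set.preimage_univ,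
        Measure.restrict_apply_univ]
      exact hBfin
    have hνuniv : ν Set.univ = μd B := by
      rw [hνdef, Measure.map_apply hψc.measurable MeasurableSet.univ, Set.preimage_univ,
        Measure.restrict_apply_univ]
    have hLd_fin : (L : ℝ≥0∞) ^ (d : ℝ) ≠ ⊤ :=
      ENNReal.rpow_ne_top_of_nonneg hd0 ENNReal.coe_ne_top
    haveI hμ1fin : IsFiniteMeasure (μ.restrict ψB) := by
      constructor
      calc (μ.restrict ψB) Set.univ ≤ (L : ℝ≥0∞) ^ (d : ℝ) * ν Set.univ :=
            hup _ MeasurableSet.univ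
        _ < ⊤ := ENNReal.mul_lt_top hLd_fin.lt_top hνfin.measure_univ_lt_top
    haveI hsubfin : IsFiniteMeasure (μ.restrict ψB - ν) :=
      isFiniteMeasure_of_le _ Measure.sub_le
    have hint_sub : Integrable g (μ.restrict ψB - ν) :=
      Integrable.mono' (integrable_const Cg) hg_cont.aestronglyMeasurable
        (Filter.Eventually.of_forall hg_bound)
    have hint_ν : Integrable g ν :=
      Integrable.mono' (integrable_const Cg) hg_cont.aestronglyMeasurable
        (Filter.Eventually.of_forall hg_bound)
    have hsplit : ∫ y, g y ∂(μ.restrict ψB)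
        = (∫ y, g y ∂(μ.restrict ψB - ν)) + ∫ y, g y ∂ν := by
      conv_lhs => rw [← Measure.sub_add_cancel_of_le hν_le]
      exact integral_add_measure hint_sub hint_ν
    have hmap : ∫ y, g y ∂ν = ∫ z in B, g (ψ z) ∂μd := by
      rw [hνdef, integral_map hψc.aemeasurable hg_cont.aestronglyMeasurable]
    -- the flat integral estimate
    haveI : IsFiniteMeasure (μd.restrict B) := by
      constructor
      rw [Measure.restrict_apply_univ]
      exact hBfin
    have hint1 : Integrable (fun z => g (ψ z)) (μd.restrict B) :=
      Integrable.mono' (integrable_const Cg) (hg_cont.comp hψc).aestronglyMeasurable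
        (Filter.Eventually.of_forall fun z => hg_bound (ψ z))
    have hint2 : Integrable F (μd.restrict B) :=
      Integrable.mono' (integrable_const Cg) hF_cont.aestronglyMeasurable
        (Filter.Eventually.of_forall fun z => hg_bound _)
    have hBint : ∫ z in B, g (ψ z) ∂μd = ∫ z in B, (g (ψ z) - F z) ∂μd := by
      rw [integral_sub hint1 hint2, hzeroF, sub_zero]
    have hptw : ∀ z ∈ B, ‖g (ψ z) - F z‖ ≤ K₂ * h := by
      intro z hz
      have hz1 : ‖z‖ ≤ R := by
        simpa [hBdef, Metric.mem_closedBall, dist_zero_right] using hz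
      have hwz : ‖w z‖ ≤ M * h * R ^ 2 := hw_bound z hz1
      have hsplitψ : ψ z = pairFn d D z 0 + pairFn d D 0 (w z) := pairFn_split z (w z)
      have hQn : ‖pairFn d D 0 (w z)‖ = ‖w z‖ := pairFn_norm_zero_left hdD' _
      have hPn : ‖pairFn d D z 0‖ = ‖z‖ := pairFn_norm_zero_right hdD' _
      have hinner : (inner ℝ v (ψ z) : ℝ)
          = (inner ℝ v (pairFn d D z 0) : ℝ) + (inner ℝ v (pairFn d D 0 (w z)) : ℝ) := by
        rw [hsplitψ, inner_add_right]
      have e : g (ψ z) - F z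
          = f (ψ z) * (inner ℝ v (pairFn d D 0 (w z)) : ℝ)
            + (f (ψ z) - f (pairFn d D z 0)) * (inner ℝ v (pairFn d D z 0) : ℝ) := by
        simp only [hgdef, hFdef]
        rw [hinner]; ring
      have i1 : |f (ψ z)| ≤ Cf := by simpa [Real.norm_eq_abs] using hCf (ψ z)
      have i2 : |(inner ℝ v (pairFn d D 0 (w z)) : ℝ)| ≤ ‖v‖ * (M * h * R ^ 2) := by
        refine (abs_real_inner_le_norm v _).trans ?_
        rw [hQn]
        exact mul_le_mul_of_nonneg_left hwz (norm_nonneg v)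
      have i3 : |f (ψ z) - f (pairFn d D z 0)| ≤ (Lf : ℝ) * (M * h * R ^ 2) := by
        have hd1 := hLf.dist_le_mul (ψ z) (pairFn d D z 0)
        rw [Real.dist_eq, dist_eq_norm] at hd1
        have : ψ z - pairFn d D z 0 = pairFn d D 0 (w z) := by
          rw [hsplitψ]; abel
        rw [this, hQn] at hd1
        exact hd1.trans (mul_le_mul_of_nonneg_left hwz (Lf : ℝ≥0).coe_nonneg)
      have i4 : |(inner ℝ v (pairFn d D z 0) : ℝ)| ≤ ‖v‖ * R := by
        refine (abs_real_inner_le_norm v _).trans ?_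
        rw [hPn]
        exact mul_le_mul_of_nonneg_left hz1 (norm_nonneg v)
      rw [e, Real.norm_eq_abs]
      have j1 : |f (ψ z) * (inner ℝ v (pairFn d D 0 (w z)) : ℝ)|
          ≤ Cf * (‖v‖ * (M * h * R ^ 2)) := by
        rw [abs_mul]
        exact mul_le_mul i1 i2 (abs_nonneg _) hCf0
      have j2 : |(f (ψ z) - f (pairFn d D z 0)) * (inner ℝ v (pairFn d D z 0) : ℝ)|
          ≤ ((Lf : ℝ) * (M * h * R ^ 2)) * (‖v‖ * R) := by
        rw [abs_mul]
        exact mul_le_mul i3 i4 (abs_nonneg _) (by positivity)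
      calc |f (ψ z) * (inner ℝ v (pairFn d D 0 (w z)) : ℝ)
            + (f (ψ z) - f (pairFn d D z 0)) * (inner ℝ v (pairFn d D z 0) : ℝ)|
          ≤ |f (ψ z) * (inner ℝ v (pairFn d D 0 (w z)) : ℝ)|
            + |(f (ψ z) - f (pairFn d D z 0)) * (inner ℝ v (pairFn d D z 0) : ℝ)| :=
            abs_add_le _ _
        _ ≤ Cf * (‖v‖ * (M * h * R ^ 2)) + ((Lf : ℝ) * (M * h * R ^ 2)) * (‖v‖ * R) := by
            linarith
        _ = K₂ * h := by rw [hK2def]; ring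
    have hflat : ‖∫ z in B, g (ψ z) ∂μd‖ ≤ K₂ * h * cB := by
      rw [hBint]
      have hb := norm_setIntegral_le_of_norm_le_const (μ := μd) hBfin hptw
      calc ‖∫ z in B, (g (ψ z) - F z) ∂μd‖ ≤ K₂ * h * (μd B).toReal := hb
        _ = K₂ * h * cB := by rw [hcBdef]
    -- the measure-difference bound
    have hsubuniv : ((μ.restrict ψB - ν) Set.univ).toReal
        ≤ ((1 + M * R * h) ^ d - 1) * cB := by
      rw [Measure.sub_apply MeasurableSet.univ hν_le]
      have hμ1top : (μ.restrict ψB) Set.univ ≠ ⊤ := hμ1fin.measure_univ_lt_top.ne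
      rw [ENNReal.toReal_sub_of_le (Measure.le_iff'.1 hν_le Set.univ) hμ1top]
      have h1 : ((μ.restrict ψB) Set.univ).toReal
          ≤ ((L : ℝ≥0∞) ^ (d : ℝ) * ν Set.univ).toReal :=
        ENNReal.toReal_mono
          (ENNReal.mul_ne_top hLd_fin hνfin.measure_univ_lt_top.ne)
          (hup _ MeasurableSet.univ)
      have h2 : ((L : ℝ≥0∞) ^ (d : ℝ) * ν Set.univ).toReal = (1 + M * R * h) ^ d * cB := by
        rw [ENNReal.toReal_mul, hνuniv, ← hcBdef]
        congr 1
        rw [← ENNReal.toReal_rpow, ENNReal.coe_toReal, hL_coe, Real.rpow_natCast]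
      have h3 : (ν Set.univ).toReal = cB := by rw [hνuniv, hcBdef]
      rw [h3]
      linarith
    have hdiffbound : ‖∫ y, g y ∂(μ.restrict ψB - ν)‖
        ≤ Cg * (((1 + M * R * h) ^ d - 1) * cB) := by
      refine (norm_integral_le_of_norm_le_const
        (Filter.Eventually.of_forall hg_bound)).trans ?_
      exact mul_le_mul_of_nonneg_left hsubuniv hCg0
    calc ‖∫ y in S, g y ∂μ‖ = ‖∫ y, g y ∂(μ.restrict ψB)‖ := by rw [hμ1]
      _ ≤ ‖∫ y, g y ∂(μ.restrict ψB - ν)‖ + ‖∫ y, g y ∂ν‖ := by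
          rw [hsplit]; exact norm_add_le _ _
      _ ≤ Cg * (((1 + M * R * h) ^ d - 1) * cB) + K₂ * h * cB := by
          refine add_le_add hdiffbound ?_
          rw [hmap]
          exact hflat
      _ = K₂ * cB * h + Cg * cB * ((1 + M * R * h) ^ d - 1) := by ring
  -- conclude the asymptotic statement
  obtain ⟨A, Bc, MR, hA0, hBc0, hMR0, key⟩ := key
  have hG1 : (fun h : ℝ =>
      ∫ y in {y : EuclideanSpace ℝ (Fin D) |
          ∃ z : EuclideanSpace ℝ (Fin d), pairFn d D z (φ z) = h • y},
        f y * (inner ℝ v y : ℝ) ∂(μH[(d : ℝ)]))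
      =O[𝓝[>] (0 : ℝ)] fun h : ℝ => A * h + Bc * ((1 + MR * h) ^ d - 1) := by
    refine IsBigO.of_bound 1 ?_
    have hmem : Set.Ioc (0 : ℝ) (min 1 R⁻¹) ∈ 𝓝[>] (0 : ℝ) :=
      Ioc_mem_nhdsGT_of_mem ⟨le_refl 0, lt_min one_pos (inv_pos.2 hR0)⟩
    filter_upwards [hmem] with h hh
    obtain ⟨hh0, hh1⟩ := hh
    have hh1' : h ≤ 1 := hh1.trans (min_le_left _ _)
    have hhR : h * R ≤ 1 := by
      have hle : h ≤ R⁻¹ := hh1.trans (min_le_right _ _)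
      calc h * R ≤ R⁻¹ * R := mul_le_mul_of_nonneg_right hle hR0.le
        _ = 1 := inv_mul_cancel₀ hR0.ne'
    have hb := key h hh0 hh1' hhR
    have h1 : (1 : ℝ) ≤ 1 + MR * h := by nlinarith
    have h2 : (1 : ℝ) ≤ (1 + MR * h) ^ d := one_le_pow₀ h1
    have hGnn : 0 ≤ A * h + Bc * ((1 + MR * h) ^ d - 1) := by nlinarith
    rw [one_mul, Real.norm_eq_abs (A * h + Bc * ((1 + MR * h) ^ d - 1)),
      abs_of_nonneg hGnn]
    exact hb
  have hG2 : (fun h : ℝ => A * h + Bc * ((1 + MR * h) ^ d - 1))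
      =O[𝓝[>] (0 : ℝ)] fun h : ℝ => h := by
    have e1 : (fun h : ℝ => A * h) =O[𝓝[>] (0 : ℝ)] fun h : ℝ => h :=
      (isBigO_refl (fun h : ℝ => h) _).const_mul_left A
    have hdiffat : DifferentiableAt ℝ (fun t : ℝ => (1 + MR * t) ^ d) 0 :=
      ((differentiableAt_id.const_mul MR).const_add 1).pow d
    have e2 : (fun h : ℝ => (1 + MR * h) ^ d - 1) =O[𝓝 (0 : ℝ)] fun h : ℝ => h := by
      have hb := hdiffat.isBigO_sub
      simpa using hb
    exact e1.add ((e2.mono nhdsWithin_le_nhds).const_mul_left Bc)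
  exact hG1.trans hG2
end
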